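/- arXiv:1312.7037 — 10 statements merged into one kernel-verified Lean document; each statement's English description precedes it below -/
import Mathlib

section
/- Let n \ge 4 be a composite positive integer and let d \ge 2 be a proper divisor of n. Then S_{n-1} \equiv (-1)^{n+d} S_{d-1} \pmod{d}. -/
/-! The recurrence `S_{k+1} = (k+1) S_k - (-1)^k` only sees `k + 1` modulo `d`, so shifting the
index by a multiple `a` of `d` multiplies `S` by `(-1)^a` modulo `d`. Apply this with
`a = n - d` and `n - 1 = a + (d - 1)`. -/

theorem numDerangements_modEq_neg_one_pow {m a : ℕ} (h : m ∣ a) :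
    (numDerangements a : ℤ) ≡ (-1) ^ a [ZMOD m] := by
  rcases a with _ | b
  · simp
  · have hb : ((b : ℤ) + 1) ≡ 0 [ZMOD m] :=
      Int.modEq_zero_iff_dvd.mpr (by exact_mod_cast h)
    calc (numDerangements (b + 1) : ℤ) = (b + 1) * numDerangements b - (-1) ^ b :=
          numDerangements_succ b
      _ ≡ 0 * numDerangements b - (-1) ^ b [ZMOD m] := (hb.mul_right _).sub_right _
      _ = (-1) ^ (b + 1) := by ring

theorem numDerangements_add_modEq {m a : ℕ} (h : m ∣ a) (j : ℕ) :
    (numDerangements (a + j) : ℤ) ≡ (-1) ^ a * numDerangements j [ZMOD m] := by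
  induction j with
  | zero => simpa using numDerangements_modEq_neg_one_pow h
  | succ j ih =>
    have ha : ((a + j : ℕ) : ℤ) + 1 ≡ (j : ℤ) + 1 [ZMOD m] := by
      simpa [add_assoc] using
        (Int.modEq_zero_iff_dvd.mpr (by exact_mod_cast h)).add_right ((j : ℤ) + 1)
    calc (numDerangements (a + j + 1) : ℤ)
        = ((a + j : ℕ) + 1) * numDerangements (a + j) - (-1) ^ (a + j) :=
          numDerangements_succ (a + j)
      _ ≡ (j + 1) * ((-1) ^ a * numDerangements j) - (-1) ^ (a + j) [ZMOD m] :=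
          (ha.mul ih).sub_right _
      _ = (-1) ^ a * ((j + 1) * numDerangements j - (-1) ^ j) := by ring
      _ = (-1) ^ a * numDerangements (j + 1) := by rw [numDerangements_succ]

theorem derangement_mod_proper_divisor_general (n d : ℕ) (hn : 4 ≤ n)
    (hdvd : d ∣ n) :
    (numDerangements (n - 1) : ℤ) ≡ (-1) ^ (n + d) * numDerangements (d - 1) [ZMOD (d : ℤ)] := by
  have hd_pos : 0 < d := Nat.pos_of_dvd_of_pos hdvd (by omega)
  have hdn : d ≤ n := Nat.le_of_dvd (by omega) hdvd
  have hsplit : n - 1 = (n - d) + (d - 1) := by omega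
  have hsign : (-1 : ℤ) ^ (n + d) = (-1) ^ (n - d) := by
    rw [show n + d = (n - d) + 2 * d by omega, pow_add, pow_mul]
    simp
  rw [hsplit, hsign]
  exact numDerangements_add_modEq (Nat.dvd_sub hdvd dvd_rfl) (d - 1)

/-- If `n ≥ 4` is composite and `d ≥ 2` is a proper divisor of `n`, then
`S_{n-1} ≡ (-1)^(n+d) S_{d-1} (mod d)`. -/
theorem derangement_mod_proper_divisor (n d : ℕ) (hn : 4 ≤ n) (hcomp : ¬ n.Prime)
    (hd2 : 2 ≤ d) (hdvd : d ∣ n) (hdn : d ≠ n) :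
    (numDerangements (n - 1) : ℤ) ≡ (-1) ^ (n + d) * numDerangements (d - 1) [ZMOD (d : ℤ)] :=
  derangement_mod_proper_divisor_general n d hn hdvd
end

section
/- Let n be an even positive integer with prime factorization n = 2^e q_1^{e_1} \cdots q_l^{e_l} (q_i distinct odd primes). If S_{2^e - 1} \equiv r \pmod{2^e} and S_{q_i^{e_i} - 1} \equiv -r \pmod{q_i^{e_i}} for all i, then S_{n-1} \equiv r \pmod{n}. -/
/-!
Write `S_{n-1} = ∑ₖ (-1)^k (k+1)(k+2)⋯(n-1)`. Modulo a divisor `d` of `n` the factors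
`k+1, …, n-1` are `-(n-1-k), …, -1`, so `S_{n-1} ≡ (-1)^{n-1} ∑_{j<n} j!`, and the terms with
`j ≥ d` vanish; hence `S_{n-1} ≡ (-1)^{n-d} S_{d-1} (mod d)`. For even `n` the sign is `+` for
`d = 2^e` and `-` for the odd prime powers, so `S_{n-1} ≡ r` modulo every prime-power factor of `n`,
and the Chinese remainder theorem concludes.
-/

open Finset Function

theorem ascFactorial_modEq_neg_one_pow_mul_factorial {d : ℤ} :
    ∀ {a : ℕ} (m : ℕ), d ∣ (a : ℤ) + m →
      (a.ascFactorial m : ℤ) ≡ (-1) ^ m * m.factorial [ZMOD d]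
  | _, 0, _ => by simp [Int.ModEq.refl]
  | a, m + 1, hd => by
    push_cast at hd
    have ih := ascFactorial_modEq_neg_one_pow_mul_factorial (a := a + 1) m
      (by convert hd using 1; push_cast; ring)
    have ha : (a : ℤ) ≡ -(m + 1) [ZMOD d] := Int.modEq_iff_dvd.2 <| by
      rw [show -((m : ℤ) + 1) - a = -(a + (m + 1)) by ring]
      exact hd.neg_right
    calc (a.ascFactorial (m + 1) : ℤ) = a * ((a + 1).ascFactorial m : ℕ) := by
          rw [Nat.ascFactorial_succ, ← Nat.succ_ascFactorial]; push_cast; ring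
      _ ≡ -(m + 1) * ((-1) ^ m * m.factorial) [ZMOD d] := ha.mul ih
      _ = (-1) ^ (m + 1) * (m + 1).factorial := by push_cast [Nat.factorial_succ]; ring

theorem numDerangements_modEq_sum_factorial {d : ℤ} {n : ℕ} (hd : d ∣ (n : ℤ) + 1) :
    (numDerangements n : ℤ) ≡ (-1) ^ n * ∑ j ∈ range (n + 1), (j.factorial : ℤ) [ZMOD d] := by
  have hterm : ∀ k ∈ range (n + 1), (-1 : ℤ) ^ k * (k + 1).ascFactorial (n - k) ≡
      (-1) ^ n * (n - k).factorial [ZMOD d] := by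
    intro k hk
    have hkn : k ≤ n := Nat.lt_succ_iff.mp (mem_range.mp hk)
    have hsum : d ∣ ((k + 1 : ℕ) : ℤ) + (n - k : ℕ) := by
      rwa [show ((k + 1 : ℕ) : ℤ) + (n - k : ℕ) = n + 1 by omega]
    calc (-1 : ℤ) ^ k * (k + 1).ascFactorial (n - k)
        ≡ (-1) ^ k * ((-1) ^ (n - k) * (n - k).factorial) [ZMOD d] :=
          (ascFactorial_modEq_neg_one_pow_mul_factorial _ hsum).mul_left _
      _ = (-1) ^ n * (n - k).factorial := by
          rw [← mul_assoc, ← pow_add, Nat.add_sub_cancel' hkn]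
  calc (numDerangements n : ℤ)
      = ∑ k ∈ range (n + 1), (-1 : ℤ) ^ k * (k + 1).ascFactorial (n - k) := numDerangements_sum n
    _ ≡ ∑ k ∈ range (n + 1), (-1) ^ n * ((n - k).factorial : ℤ) [ZMOD d] := Int.ModEq.sum hterm
    _ = (-1) ^ n * ∑ j ∈ range (n + 1), (j.factorial : ℤ) := by
        rw [← mul_sum, ← sum_range_reflect (fun j ↦ (j.factorial : ℤ)), Nat.add_sub_cancel]

theorem sum_range_factorial_modEq_of_le {d n : ℕ} (hd : 0 < d) (hdn : d ≤ n) :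
    ∑ j ∈ range n, (j.factorial : ℤ) ≡ ∑ j ∈ range d, (j.factorial : ℤ) [ZMOD d] := by
  have htail : (d : ℤ) ∣ ∑ j ∈ Ico d n, (j.factorial : ℤ) :=
    dvd_sum fun j hj ↦ Int.natCast_dvd_natCast.2 (Nat.dvd_factorial hd (mem_Ico.1 hj).1)
  rw [← sum_range_add_sum_Ico _ hdn]
  simpa using htail

theorem numDerangements_pred_modEq_of_dvd {d n : ℕ} (hn : 0 < n) (hdn : d ∣ n) :
    (numDerangements (n - 1) : ℤ) ≡ (-1) ^ (n - d) * numDerangements (d - 1) [ZMOD d] := by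
  have hd : 0 < d := Nat.pos_of_dvd_of_pos hdn hn
  have hle : d ≤ n := Nat.le_of_dvd hn hdn
  have hSd := numDerangements_modEq_sum_factorial (d := d) (n := d - 1) (by push_cast [hd]; simp)
  have hSn := numDerangements_modEq_sum_factorial (d := d) (n := n - 1)
    (by push_cast [hn]; simpa using Int.natCast_dvd_natCast.2 hdn)
  rw [Nat.sub_add_cancel hd] at hSd
  rw [Nat.sub_add_cancel hn] at hSn
  calc (numDerangements (n - 1) : ℤ)
      ≡ (-1) ^ (n - 1) * ∑ j ∈ range d, (j.factorial : ℤ) [ZMOD d] :=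
        hSn.trans ((sum_range_factorial_modEq_of_le hd hle).mul_left _)
    _ = (-1) ^ (n - d) * ((-1) ^ (d - 1) * ∑ j ∈ range d, (j.factorial : ℤ)) := by
        rw [← mul_assoc, ← pow_add, show n - d + (d - 1) = n - 1 by omega]
    _ ≡ (-1) ^ (n - d) * numDerangements (d - 1) [ZMOD d] := hSd.symm.mul_left _

theorem Int.modEq_prod_of_pairwise_coprime {ι : Type*} [Fintype ι] {m : ι → ℕ}
    (hm : Pairwise (Nat.Coprime on m)) {a b : ℤ} (h : ∀ i, a ≡ b [ZMOD m i]) :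
    a ≡ b [ZMOD ((∏ i, m i : ℕ) : ℤ)] := by
  rw [Nat.cast_prod]
  exact Int.modEq_iff_dvd.2 <| Fintype.prod_dvd_of_coprime
    (fun i j hij ↦ Nat.isCoprime_iff_coprime.2 (hm hij)) fun i ↦ (h i).dvd

theorem derangement_crt_even_general (l : ℕ) (q ee : Fin l → ℕ) (e : ℕ) (r : ℤ)
    (hq : ∀ i, (q i).Prime) (hodd : ∀ i, Odd (q i)) (hinj : Function.Injective q)
    (he : 0 < e)
    (h2 : (numDerangements (2 ^ e - 1) : ℤ) ≡ r [ZMOD ((2 ^ e : ℕ) : ℤ)])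
    (hcong : ∀ i, (numDerangements (q i ^ ee i - 1) : ℤ) ≡ -r [ZMOD ((q i ^ ee i : ℕ) : ℤ)]) :
    (numDerangements ((2 ^ e * ∏ i, q i ^ ee i) - 1) : ℤ) ≡ r
      [ZMOD ((2 ^ e * ∏ i, q i ^ ee i : ℕ) : ℤ)] := by
  set P := ∏ i, q i ^ ee i
  have hn : 0 < 2 ^ e * P := Nat.mul_pos (by positivity) (prod_pos fun i _ ↦ pow_pos (hq i).pos _)
  have h2e : Even (2 ^ e) := Nat.even_pow.2 ⟨even_two, he.ne'⟩
  have hn_even : Even (2 ^ e * P) := h2e.mul_right P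
  have hmod2 : (numDerangements (2 ^ e * P - 1) : ℤ) ≡ r [ZMOD ((2 ^ e : ℕ) : ℤ)] := by
    have h := numDerangements_pred_modEq_of_dvd hn (dvd_mul_right (2 ^ e) P)
    rw [(hn_even.tsub h2e).neg_one_pow, one_mul] at h
    exact h.trans h2
  have hmodq : ∀ i, (numDerangements (2 ^ e * P - 1) : ℤ) ≡ r [ZMOD ((q i ^ ee i : ℕ) : ℤ)] := by
    intro i
    have hdvd : q i ^ ee i ∣ 2 ^ e * P := dvd_mul_of_dvd_right (dvd_prod_of_mem _ (mem_univ i)) _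
    have h := numDerangements_pred_modEq_of_dvd hn hdvd
    rw [(Nat.Even.sub_odd (Nat.le_of_dvd hn hdvd) hn_even (hodd i).pow).neg_one_pow] at h
    simpa using h.trans ((hcong i).mul_left (-1))
  have hmodP : (numDerangements (2 ^ e * P - 1) : ℤ) ≡ r [ZMOD ((P : ℕ) : ℤ)] :=
    Int.modEq_prod_of_pairwise_coprime (fun i j hij ↦
      ((Nat.coprime_primes (hq i) (hq j)).2 (hinj.ne hij)).pow _ _) hmodq
  have hcop2 : Nat.Coprime (2 ^ e) P :=
    Nat.Coprime.pow_left _ <| Nat.Coprime.prod_right fun i _ ↦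
      Nat.Coprime.pow_right _ (Nat.coprime_two_left.2 (hodd i))
  rw [Nat.cast_mul, ← Int.modEq_and_modEq_iff_modEq_mul (by simpa using hcop2)]
  exact ⟨hmod2, hmodP⟩

/-- Let `n = 2^e * ∏ q_i^{e_i}` be even (`e ≥ 1`), `q_i` distinct odd primes. If
`S_{2^e-1} ≡ r (mod 2^e)` and `S_{q_i^{e_i}-1} ≡ -r (mod q_i^{e_i})` for all `i`,
then `S_{n-1} ≡ r (mod n)`. -/
theorem derangement_crt_even (l : ℕ) (q ee : Fin l → ℕ) (e : ℕ) (r : ℤ)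
    (hq : ∀ i, (q i).Prime) (hodd : ∀ i, Odd (q i)) (hinj : Function.Injective q)
    (hee : ∀ i, 0 < ee i) (he : 0 < e)
    (h2 : (numDerangements (2 ^ e - 1) : ℤ) ≡ r [ZMOD ((2 ^ e : ℕ) : ℤ)])
    (hcong : ∀ i, (numDerangements (q i ^ ee i - 1) : ℤ) ≡ -r [ZMOD ((q i ^ ee i : ℕ) : ℤ)]) :
    (numDerangements ((2 ^ e * ∏ i, q i ^ ee i) - 1) : ℤ) ≡ r
      [ZMOD ((2 ^ e * ∏ i, q i ^ ee i : ℕ) : ℤ)] :=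
  derangement_crt_even_general l q ee e r hq hodd hinj he h2 hcong
end

section
/- The following are equivalent: (a) S_{p-1} \not\equiv 0 \pmod{p} for every prime p \ge 3; (b) S_{n-1} \not\equiv 0 \pmod{n} for every integer n \ge 3. -/
/-! Modulo a divisor `d` of `N`, the recursion `D (m + 1) = (m + 1) D m - (-1) ^ m` does not see a
shift of the index by `N`, so `D (n + N) ≡ (-1) ^ N D n (mod d)`. For `d ∣ n` this gives
`d ∣ D (n - 1) ↔ d ∣ D (d - 1)`. Every `n ≥ 3` has a divisor that is an odd prime or `4`, and
`4 ∤ D 3 = 2`, so a counterexample `n` yields a counterexample prime. -/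

lemma numDerangements_succ_cast (R : Type*) [CommRing R] (m : ℕ) :
    (numDerangements (m + 1) : R) = (m + 1) * numDerangements m - (-1) ^ m := by
  exact_mod_cast congrArg (Int.cast : ℤ → R) (numDerangements_succ m)

lemma numDerangements_add_of_dvd {d N : ℕ} (h : d ∣ N) (n : ℕ) :
    (numDerangements (n + N) : ZMod d) = (-1) ^ N * numDerangements n := by
  have hN : (N : ZMod d) = 0 := (ZMod.natCast_eq_zero_iff N d).mpr h
  induction n with
  | zero =>
    rcases N with _ | M
    · simp
    · rw [zero_add, numDerangements_succ_cast, ← Nat.cast_succ, hN, numDerangements_zero]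
      ring
  | succ n ih =>
    rw [Nat.add_right_comm, numDerangements_succ_cast, numDerangements_succ_cast, ih]
    push_cast [hN]
    ring

lemma dvd_numDerangements_pred_iff {d n : ℕ} (hdn : d ∣ n) (hn : 0 < n) :
    d ∣ numDerangements (n - 1) ↔ d ∣ numDerangements (d - 1) := by
  obtain ⟨q, rfl⟩ := hdn
  have hd : 0 < d := Nat.pos_of_mul_pos_right hn
  have hq : 0 < q := Nat.pos_of_mul_pos_left hn
  have hindex : d * q - 1 = (d - 1) + d * (q - 1) := by
    rw [Nat.mul_sub_one]
    have := Nat.le_mul_of_pos_right d hq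
    omega
  rw [← ZMod.natCast_eq_zero_iff, ← ZMod.natCast_eq_zero_iff, hindex,
    numDerangements_add_of_dvd (dvd_mul_right d _)]
  exact ((isUnit_one.neg).pow _).mul_right_eq_zero

/-- `S_{p-1} ≢ 0 (mod p)` for every prime `p ≥ 3` iff
`S_{n-1} ≢ 0 (mod n)` for every integer `n ≥ 3`. -/
theorem derangement_prime_iff_all :
    (∀ p : ℕ, p.Prime → 3 ≤ p → ¬ p ∣ numDerangements (p - 1)) ↔
      (∀ n : ℕ, 3 ≤ n → ¬ n ∣ numDerangements (n - 1)) := by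
  refine ⟨fun hprime n hn hdvd => ?_, fun hall p _ hp => hall p hp⟩
  have hdiv {d : ℕ} (hd : d ∣ n) : d ∣ numDerangements (d - 1) :=
    (dvd_numDerangements_pred_iff hd (by omega)).mp (hd.trans hdvd)
  obtain h4 | ⟨p, hp, hpn, hodd⟩ := Nat.four_dvd_or_exists_odd_prime_and_dvd_of_two_lt hn
  · exact absurd (hdiv h4) (by decide)
  · have hp3 : 3 ≤ p := by
      have := hp.two_le
      rcases hodd with ⟨k, rfl⟩
      omega
    exact hprime p hp hp3 (hdiv hpn)
end

section
/- If n \ge 9 is an odd composite integer, then n divides 180 \cdot (n-7)!. -/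
open Nat

/-!
Write `n = p * m` with `p` the least prime factor of `n`, so `3 ≤ p ≤ m` because `n` is odd and
composite. If `p < m`, both factors appear separately in `(n - 7)!`; if `p = m ≥ 5`, then `p` and
`2 * p` do. The only case left is `n = 9`, where `9 ∣ 180 * 2!`.
-/

theorem mul_dvd_factorial {a b k : ℕ} (ha : 0 < a) (hab : a < b) (hbk : b ≤ k) :
    a * b ∣ k ! := by
  have hb : a * b ∣ b ! := by
    rw [← mul_factorial_pred (by omega : b ≠ 0), mul_comm a b]
    exact mul_dvd_mul_left b (dvd_factorial ha (by omega))
  exact hb.trans (factorial_dvd_factorial hbk)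

theorem mul_dvd_factorial_mul_sub_seven {a b : ℕ} (ha : 3 ≤ a) (hab : a ≤ b) (hb : 4 ≤ b) :
    a * b ∣ (a * b - 7)! := by
  rcases hab.lt_or_eq with hlt | rfl
  · have : 3 * b ≤ a * b := Nat.mul_le_mul_right b ha
    exact mul_dvd_factorial (by omega) hlt (by omega)
  · have : 4 * a ≤ a * a := Nat.mul_le_mul_right a hb
    calc a * a ∣ a * (2 * a) := mul_dvd_mul_left a (dvd_mul_left a 2)
      _ ∣ (a * a - 7)! := mul_dvd_factorial (by omega) (by omega) (by omega)

/-- If `n ≥ 9` is an odd composite integer, then `n` divides `180·(n-7)!`. -/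
theorem odd_composite_dvd_factorial (n : ℕ) (hn : 9 ≤ n) (hodd : Odd n)
    (hcomp : ¬ n.Prime) :
    n ∣ 180 * (n - 7).factorial := by
  obtain rfl | hn9 := hn.eq_or_lt
  · decide
  refine Dvd.dvd.mul_left ?_ 180
  set p := n.minFac
  have hp : p.Prime := minFac_prime (by omega)
  have hp3 : 3 ≤ p := by
    obtain ⟨k, hk⟩ := hodd.of_dvd_nat (minFac_dvd n)
    have := hp.two_le
    omega
  have hpm : p ≤ n / p := minFac_le_div (by omega) hcomp
  have hn_eq : p * (n / p) = n := Nat.mul_div_cancel' (minFac_dvd n)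
  have hm4 : 4 ≤ n / p := by
    by_contra! h
    have : p * (n / p) ≤ 3 * 3 := Nat.mul_le_mul (by omega) (by omega)
    omega
  rw [← hn_eq]
  exact mul_dvd_factorial_mul_sub_seven hp3 hpm hm4
end

section
/- For every prime p \ge 3, B_{p-1} - 1 \equiv S_{p-1} \pmod{p}, where B_n are the Bell numbers and S_n the derangement numbers. -/
/-- The Bell numbers: `B₀ = 1` and `B_{n+1} = ∑_{k=0}^{n} C(n,k)·B_k`. -/
def bell : ℕ → ℕ
  | 0 => 1
  | n + 1 => ∑ k ∈ (Finset.range (n + 1)).attach,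
      n.choose k.val * bell k.val
decreasing_by exact Finset.mem_range.mp k.2

/-!
Expand `B_{p-1} = ∑ₖ S₂(p-1, k)` in Stirling numbers of the second kind. Taking the `k`-th forward
difference at `0` of `xⁿ = ∑ₖ k! S₂(n, k) C(x, k)` gives `k! S₂(n, k) = ∑ⱼ (-1)^(k-j) C(k, j) jⁿ`.
For `n = p - 1` and `k < p`, Fermat's little theorem turns `jⁿ` into `1` for `j ≠ 0`, so
`k! S₂(p-1, k) ≡ [k = 0] - (-1)^k` and `B_{p-1} ≡ 1 - ∑_{k<p} (-1)^k / k!`. On the other side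
`S_{p-1} = (p-1)! ∑_{k<p} (-1)^k / k! ≡ -∑_{k<p} (-1)^k / k!` by Wilson's theorem.
-/

open Finset Nat

namespace Nat

theorem stirlingSecond_succ_succ_eq_sum_choose_mul (n k : ℕ) :
    stirlingSecond (n + 1) (k + 1) = ∑ j ∈ range (n + 1), n.choose j * stirlingSecond j k := by
  induction n generalizing k with
  | zero => simp [stirlingSecond_succ_succ]
  | succ n ih =>
    cases k with
    | zero => simp [stirlingSecond_one_right, sum_range_succ' _ (n + 1)]
    | succ k =>
      have hshift : ∑ j ∈ range (n + 1), n.choose (j + 1) * stirlingSecond (j + 1) (k + 1) =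
          ∑ j ∈ range (n + 1), n.choose j * stirlingSecond j (k + 1) := by
        rw [sum_range_succ, sum_range_succ' _ n]
        simp
      rw [stirlingSecond_succ_succ, ih, ih, sum_range_succ' _ (n + 1)]
      simp only [choose_succ_succ', add_mul, sum_add_distrib]
      rw [hshift]
      simp only [stirlingSecond_succ_succ, stirlingSecond_zero_succ, mul_zero, add_zero, mul_add,
        sum_add_distrib, mul_left_comm (n.choose _), ← mul_sum]
      ring

theorem mul_choose_eq_succ_mul_choose_succ_add (x k : ℕ) :
    x * x.choose k = (k + 1) * x.choose (k + 1) + k * x.choose k := by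
  rw [mul_comm (k + 1), choose_succ_right_eq]
  rcases le_or_gt k x with hk | hk
  · rw [mul_comm k, ← mul_add, Nat.sub_add_cancel hk, mul_comm]
  · simp [choose_eq_zero_of_lt hk]

theorem pow_eq_sum_factorial_mul_stirlingSecond_mul_choose (n x : ℕ) :
    x ^ n = ∑ k ∈ range (n + 1), k ! * stirlingSecond n k * x.choose k := by
  induction n with
  | zero => simp
  | succ n ih =>
    have hshift : ∑ k ∈ range (n + 1), k ! * stirlingSecond n k * (k * x.choose k) =
        ∑ k ∈ range (n + 1), (k + 1)! * ((k + 1) * stirlingSecond n (k + 1)) *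
          x.choose (k + 1) := by
      rw [sum_range_succ' _ n, sum_range_succ _ n, stirlingSecond_eq_zero_of_lt n.lt_succ_self]
      simp only [factorial_succ, factorial_zero, one_mul, choose_zero_right, mul_one, mul_zero,
        add_zero, zero_mul]
      exact sum_congr rfl fun k _ => by ring
    calc x ^ (n + 1)
        = ∑ k ∈ range (n + 1), k ! * stirlingSecond n k * (x * x.choose k) := by
          rw [pow_succ, ih, sum_mul]
          exact sum_congr rfl fun k _ => by ring
      _ = ∑ k ∈ range (n + 1), (k + 1)! * stirlingSecond n k * x.choose (k + 1)
          + ∑ k ∈ range (n + 1), k ! * stirlingSecond n k * (k * x.choose k) := by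
          simp only [mul_choose_eq_succ_mul_choose_succ_add, mul_add, sum_add_distrib,
            factorial_succ]
          congr 1
          exact sum_congr rfl fun k _ => by ring
      _ = ∑ k ∈ range (n + 1), (k + 1)! * stirlingSecond (n + 1) (k + 1) * x.choose (k + 1) := by
          rw [hshift, ← sum_add_distrib]
          exact sum_congr rfl fun k _ => by rw [stirlingSecond_succ_succ]; ring
      _ = ∑ k ∈ range (n + 1 + 1), k ! * stirlingSecond (n + 1) k * x.choose k := by
          simp [sum_range_succ' _ (n + 1)]

theorem factorial_mul_stirlingSecond_eq_sum (n k : ℕ) :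
    (k ! * stirlingSecond n k : ℤ) =
      ∑ j ∈ range (k + 1), (-1) ^ (k - j) * k.choose j * (j : ℤ) ^ n := by
  have hpow : (fun x : ℕ => (x : ℤ) ^ n) =
      ∑ m ∈ range (n + 1),
        ((m ! * stirlingSecond n m : ℕ) : ℤ) • fun x : ℕ => (x.choose m : ℤ) := by
    ext x
    simp only [Finset.sum_apply, Pi.smul_apply, smul_eq_mul]
    exact_mod_cast pow_eq_sum_factorial_mul_stirlingSecond_mul_choose n x
  calc (k ! * stirlingSecond n k : ℤ)
      = (fwdDiff 1)^[k] (fun x : ℕ => (x : ℤ) ^ n) 0 := by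
        rw [hpow, fwdDiff_iter_finsetSum, Finset.sum_apply]
        simp only [fwdDiff_iter_const_smul, Pi.smul_apply, fwdDiff_iter_choose_zero, smul_eq_mul,
          mul_ite, mul_one, mul_zero, sum_ite_eq, mem_range]
        split_ifs with hk
        · push_cast; rfl
        · simp [stirlingSecond_eq_zero_of_lt (not_lt.mp hk)]
    _ = _ := by simp [fwdDiff_iter_eq_sum_shift]

end Nat

theorem ZMod.natCast_pow_card_sub_one_of_lt {p j : ℕ} [Fact p.Prime] (hj : j < p) :
    (j : ZMod p) ^ (p - 1) = 1 - if j = 0 then 1 else 0 := by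
  rw [ZMod.pow_card_sub_one]
  rcases eq_or_ne j 0 with rfl | hj0
  · simp
  · have : (j : ZMod p) ≠ 0 := by
      rw [Ne, ZMod.natCast_eq_zero_iff]
      exact fun h => hj0 (Nat.eq_zero_of_dvd_of_lt h hj)
    simp [this, hj0]

theorem ZMod.factorial_mul_stirlingSecond_card_sub_one {p k : ℕ} [Fact p.Prime] (hk : k < p) :
    (k ! * stirlingSecond (p - 1) k : ZMod p) = (if k = 0 then 1 else 0) - (-1) ^ k := by
  have h := congrArg (Int.cast : ℤ → ZMod p) (factorial_mul_stirlingSecond_eq_sum (p - 1) k)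
  push_cast at h
  rw [h, sum_congr rfl fun j hj => by
    rw [ZMod.natCast_pow_card_sub_one_of_lt (lt_of_lt_of_le (mem_range.mp hj) hk)]]
  simp only [mul_sub, mul_one, sum_sub_distrib, mul_ite, mul_zero, sum_ite_eq', mem_range,
    Nat.zero_lt_succ, if_true]
  rw [← zero_pow_eq, ← add_neg_cancel (1 : ZMod p), add_pow]
  simp [mul_comm]

theorem bell_succ_eq_sum (n : ℕ) :
    bell (n + 1) = ∑ k ∈ range (n + 1), n.choose k * bell k := by
  rw [bell, sum_attach (range (n + 1)) fun k => n.choose k * bell k]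

theorem bell_eq_sum_stirlingSecond (n : ℕ) : bell n = ∑ k ∈ range (n + 1), stirlingSecond n k := by
  induction n using Nat.strong_induction_on with
  | _ n ih =>
    cases n with
    | zero => simp [bell]
    | succ n =>
      have hterm : ∀ j ∈ range (n + 1),
          n.choose j * bell j = ∑ k ∈ range (n + 1), n.choose j * stirlingSecond j k := by
        intro j hj
        have hjn : j < n + 1 := mem_range.mp hj
        rw [ih j hjn, mul_sum]
        refine sum_subset (range_subset_range.mpr hjn) fun k _ hk => ?_
        rw [stirlingSecond_eq_zero_of_lt (by simpa using hk), mul_zero]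
      rw [bell_succ_eq_sum, sum_congr rfl hterm, sum_comm, sum_range_succ' _ (n + 1)]
      simp [stirlingSecond_succ_succ_eq_sum_choose_mul]

theorem natCast_bell_prime_sub_one {p : ℕ} [Fact p.Prime] :
    (bell (p - 1) : ZMod p) = 1 - ∑ k ∈ range p, (-1) ^ k * (k ! : ZMod p)⁻¹ := by
  have hp : p - 1 + 1 = p := Nat.sub_add_cancel (Fact.out : p.Prime).one_le
  have hterm : ∀ k ∈ range p, (stirlingSecond (p - 1) k : ZMod p) =
      (k ! : ZMod p)⁻¹ * ((if k = 0 then 1 else 0) - (-1) ^ k) := by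
    intro k hk
    have hk0 : (k ! : ZMod p) ≠ 0 :=
      ((IsUnit.natCast_factorial_iff_of_charP p).mpr (mem_range.mp hk)).ne_zero
    rw [← ZMod.factorial_mul_stirlingSecond_card_sub_one (mem_range.mp hk),
      inv_mul_cancel_left₀ hk0]
  rw [bell_eq_sum_stirlingSecond, hp, Nat.cast_sum, sum_congr rfl hterm]
  simp [mul_sub, sum_sub_distrib, (Fact.out : p.Prime).pos, mul_comm]

theorem natCast_numDerangements_eq_factorial_mul_sum {K : Type*} [Field K] {n : ℕ}
    (hn : (n ! : K) ≠ 0) :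
    (numDerangements n : K) = n ! * ∑ k ∈ range (n + 1), (-1) ^ k * (k ! : K)⁻¹ := by
  have h := congrArg (Int.cast : ℤ → K) (numDerangements_sum n)
  push_cast at h
  rw [h, mul_sum]
  refine sum_congr rfl fun k hk => ?_
  have hkn : k ≤ n := Nat.lt_succ_iff.mp (mem_range.mp hk)
  have hk0 : (k ! : K) ≠ 0 :=
    (IsUnit.natCast_factorial_of_le (isUnit_iff_ne_zero.mpr hn) hkn).ne_zero
  have hasc : (k ! : K) * (k + 1).ascFactorial (n - k) = n ! := by
    rw [← Nat.cast_mul, factorial_mul_ascFactorial, Nat.add_sub_cancel' hkn]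
  rw [← hasc]
  field_simp

theorem natCast_numDerangements_prime_sub_one {p : ℕ} [Fact p.Prime] :
    (numDerangements (p - 1) : ZMod p) = -∑ k ∈ range p, (-1) ^ k * (k ! : ZMod p)⁻¹ := by
  have hp : p - 1 + 1 = p := Nat.sub_add_cancel (Fact.out : p.Prime).one_le
  rw [natCast_numDerangements_eq_factorial_mul_sum (by simp [ZMod.wilsons_lemma]),
    ZMod.wilsons_lemma, hp, neg_one_mul]

theorem bell_sub_one_eq_derangement_mod_general (p : ℕ) (hp : p.Prime) :
    (bell (p - 1) : ℤ) - 1 ≡ (numDerangements (p - 1) : ℤ) [ZMOD (p : ℤ)] := by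
  have : Fact p.Prime := ⟨hp⟩
  rw [← ZMod.intCast_eq_intCast_iff]
  push_cast
  rw [natCast_bell_prime_sub_one, natCast_numDerangements_prime_sub_one]
  ring

/-- For every prime `p ≥ 3`, `B_{p-1} - 1 ≡ S_{p-1} (mod p)`. -/
theorem bell_sub_one_eq_derangement_mod (p : ℕ) (hp : p.Prime) (hp3 : 3 ≤ p) :
    (bell (p - 1) : ℤ) - 1 ≡ (numDerangements (p - 1) : ℤ) [ZMOD (p : ℤ)] :=
  bell_sub_one_eq_derangement_mod_general p hp
end

section
/- Let p be an odd prime and let A be the (p-1) x (p-1) matrix over F_p with entries A_{ij} = (p-i)^{p-j} for 1 \le i, j \le p-1, and let B be the matrix with entries B_{ij} = (p-j)^{i-1}. Then A \cdot B = -I, where I is the identity matrix of order p-1. -/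
/-!
Writing `a = p - i` and `b = p - j`, the `(i, j)` entry of `A * B` is
`∑_{k < p-1} a^(p-1-k) b^k` in `𝔽_p`. If `a = b`, every term is `a^(p-1) = 1` and the sum is
`p - 1 = -1`. If `a ≠ b`, the sum is `a` times the geometric sum whose product with `b - a`
is `b^(p-1) - a^(p-1) = 0` by Fermat's little theorem.
-/

open Finset

theorem geom_sum₂_eq_zero_of_pow_eq {R : Type*} [CommRing R] [IsDomain R] {x y : R} {n : ℕ}
    (hxy : x ≠ y) (hpow : x ^ n = y ^ n) :
    ∑ i ∈ range n, x ^ i * y ^ (n - 1 - i) = 0 := by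
  have h := geom_sum₂_mul x y n
  rw [hpow, sub_self] at h
  exact (mul_eq_zero.mp h).resolve_right (sub_ne_zero.mpr hxy)

namespace FiniteField

variable {K : Type*} [Field K] [Fintype K] [DecidableEq K]

theorem sum_pow_card_sub_succ_mul_pow {a b : K} (ha : a ≠ 0) (hb : b ≠ 0) :
    ∑ k ∈ range (Fintype.card K - 1), a ^ (Fintype.card K - (k + 1)) * b ^ k =
      if a = b then -1 else 0 := by
  set q := Fintype.card K
  have hq : 1 ≤ q := Fintype.card_pos
  split_ifs with hab
  · subst hab
    have hterm : ∀ k ∈ range (q - 1), a ^ (q - (k + 1)) * a ^ k = 1 := fun k hk => by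
      have hk : k < q - 1 := mem_range.mp hk
      rw [← pow_add, show q - (k + 1) + k = q - 1 by omega, pow_card_sub_one_eq_one a ha]
    rw [sum_congr rfl hterm, sum_const, card_range, nsmul_one, Nat.cast_sub hq,
      cast_card_eq_zero, Nat.cast_one, zero_sub]
  · have hterm : ∀ k ∈ range (q - 1),
        a ^ (q - (k + 1)) * b ^ k = a * (b ^ k * a ^ (q - 1 - 1 - k)) := fun k hk => by
      have hk : k < q - 1 := mem_range.mp hk
      rw [show q - (k + 1) = q - 1 - 1 - k + 1 by omega, pow_succ]
      ring
    rw [sum_congr rfl hterm, ← mul_sum, geom_sum₂_eq_zero_of_pow_eq (Ne.symm hab)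
      (by rw [pow_card_sub_one_eq_one b hb, pow_card_sub_one_eq_one a ha]), mul_zero]

end FiniteField

namespace ZMod

theorem natCast_sub_succ_ne_zero {p i : ℕ} (hi : i < p - 1) :
    ((p - (i + 1) : ℕ) : ZMod p) ≠ 0 := by
  rw [Ne, natCast_eq_zero_iff]
  exact fun h => absurd (Nat.le_of_dvd (by omega) h) (by omega)

theorem natCast_sub_succ_inj {p i j : ℕ} (hi : i < p) (hj : j < p) :
    ((p - (i + 1) : ℕ) : ZMod p) = ((p - (j + 1) : ℕ) : ZMod p) ↔ i = j := by
  rw [natCast_eq_natCast_iff', Nat.mod_eq_of_lt (by omega), Nat.mod_eq_of_lt (by omega)]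
  omega

end ZMod

theorem matrix_mul_eq_neg_one_general (p : ℕ) (hp : p.Prime) :
    (Matrix.of fun i j : Fin (p - 1) =>
        ((p - (i.val + 1) : ℕ) : ZMod p) ^ (p - (j.val + 1))) *
      (Matrix.of fun i j : Fin (p - 1) =>
        ((p - (j.val + 1) : ℕ) : ZMod p) ^ i.val) = -1 := by
  have := Fact.mk hp
  ext i j
  have hsum := FiniteField.sum_pow_card_sub_succ_mul_pow
    (ZMod.natCast_sub_succ_ne_zero i.isLt) (ZMod.natCast_sub_succ_ne_zero j.isLt)
  rw [ZMod.card, ← Fin.sum_univ_eq_sum_range (fun k => _ ^ (p - (k + 1)) * _ ^ k)] at hsum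
  simp only [ZMod.natCast_sub_succ_inj (by omega : i.val < p) (by omega : j.val < p),
    ← Fin.ext_iff] at hsum
  simp only [Matrix.mul_apply, Matrix.of_apply, Matrix.neg_apply, Matrix.one_apply, hsum,
    neg_ite, neg_zero]

/-- For an odd prime `p`, the `(p-1)×(p-1)` matrices over `F_p` with entries
`A_{ij} = (p-i)^{p-j}` and `B_{ij} = (p-j)^{i-1}` (indices `1 ≤ i, j ≤ p-1`)
satisfy `A·B = -I`. -/
theorem matrix_mul_eq_neg_one (p : ℕ) (hp : p.Prime) (hodd : Odd p) :
    (Matrix.of fun i j : Fin (p - 1) =>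
        ((p - (i.val + 1) : ℕ) : ZMod p) ^ (p - (j.val + 1))) *
      (Matrix.of fun i j : Fin (p - 1) =>
        ((p - (j.val + 1) : ℕ) : ZMod p) ^ i.val) = -1 :=
  matrix_mul_eq_neg_one_general p hp
end

section
/- Let p be an odd prime and A the (p-1) x (p-1) matrix over F_p with entries A_{ij} = (p-i)^{p-j}. Then det(A) \equiv (-1)^{(p^2-1)/8} \cdot ((p-1)/2)! \pmod{p}. -/
/-!
Reversing the order of the rows and of the columns turns the matrix into `(i ^ j)` for
`1 ≤ i, j ≤ p - 1`, i.e. a Vandermonde matrix with its rows scaled by `i`, whose determinant is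
`(p - 1)! · ∏_{i < j} (j - i) = ∏_{k = 1}^{p - 1} k!`, the superfactorial `sf (p - 1)`.
Modulo `p`, Wilson's theorem gives `k! (p - 1 - k)! = (-1)^(k + 1)`, so pairing `k!` with
`(p - 1 - k)!` for `k < h = (p - 1) / 2` leaves `h!` times
`(-1)^(1 + ⋯ + h) = (-1)^((p² - 1) / 8)`.
-/

open Finset Matrix
open scoped Nat

theorem Finset.prod_range_two_mul_add_one {M : Type*} [CommMonoid M] (f : ℕ → M) (h : ℕ) :
    ∏ x ∈ range (2 * h + 1), f x = f h * ∏ x ∈ range h, f x * f (2 * h - x) := by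
  rw [two_mul, add_assoc, prod_range_add, prod_range_succ',
    ← prod_range_reflect (fun x => f (h + (x + 1))), add_zero, prod_mul_distrib]
  rw [Finset.prod_congr rfl fun x hx => show f (h + (h - 1 - x + 1)) = f (h + h - x) by
    rw [mem_range] at hx; congr 1; omega]
  ac_rfl

theorem ZMod.factorial_mul_factorial_sub_one_sub (p : ℕ) [Fact p.Prime] {k : ℕ}
    (hk : k ≤ p - 1) :
    (k ! * (p - 1 - k)! : ZMod p) = (-1) ^ (k + 1) := by
  -- `(p - 1 - k)! · (p - 1)(p - 2)⋯(p - k) = (p - 1)!`, and `(p - 1)⋯(p - k) ≡ (-1)^k k!`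
  have hwilson := congrArg (Nat.cast : ℕ → ZMod p) (Nat.factorial_mul_descFactorial hk)
  push_cast at hwilson
  rw [ZMod.cast_descFactorial (by omega), ZMod.wilsons_lemma] at hwilson
  have hsq : ((-1 : ZMod p) ^ k) ^ 2 = 1 := by rw [← pow_mul, mul_comm, pow_mul]; simp
  linear_combination (-1 : ZMod p) ^ k * hwilson - (k ! * (p - 1 - k)! : ZMod p) * hsq

theorem ZMod.superFactorial_two_mul (p h : ℕ) [Fact p.Prime] (hp : p = 2 * h + 1) :
    (sf (2 * h) : ZMod p) = (-1) ^ ((h + 1) * h / 2) * h ! := by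
  have hpair : ∀ x ∈ range h, (x ! * (2 * h - x)! : ZMod p) = (-1) ^ (x + 1) := fun x hx => by
    rw [show 2 * h - x = p - 1 - x by omega]
    exact factorial_mul_factorial_sub_one_sub p (by rw [mem_range] at hx; omega)
  have hexp : ∑ x ∈ range h, (x + 1) = (h + 1) * h / 2 := by
    have hshift := Finset.sum_range_succ' (fun x => x) h
    rw [add_zero] at hshift
    rw [← hshift, Finset.sum_range_id, Nat.add_sub_cancel]
  rw [← Nat.prod_range_succ_factorial, Nat.cast_prod, prod_range_two_mul_add_one]
  rw [prod_congr rfl hpair, prod_pow_eq_pow_sum, hexp, mul_comm]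

theorem Matrix.det_of_succ_pow_succ (R : Type*) [CommRing R] (n : ℕ) :
    (of fun i j : Fin n => ((i : R) + 1) ^ ((j : ℕ) + 1)).det = sf n := by
  have hcol : (of fun i j : Fin n => ((i : R) + 1) ^ ((j : ℕ) + 1)) =
      of fun i j : Fin n => ((i : R) + 1) * vandermonde (fun k : Fin n => (k : R) + 1) i j := by
    ext i j
    rw [of_apply, of_apply, vandermonde_apply, pow_succ']
  rw [hcol, det_mul_column, det_vandermonde_add]
  cases n with
  | zero => simp
  | succ n =>
    rw [det_vandermonde_id_eq_superFactorial, Nat.superFactorial_succ, Nat.cast_mul,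
      ← Finset.prod_range_add_one_eq_factorial, Nat.cast_prod,
      Fin.prod_univ_eq_prod_range (fun i => (i : R) + 1)]
    push_cast
    rfl

theorem Matrix.det_of_sub_pow_sub (R : Type*) [CommRing R] (n : ℕ) :
    (of fun i j : Fin n => ((n - i : ℕ) : R) ^ (n - j)).det = sf n := by
  have hrev : (of fun i j : Fin n => ((n - i : ℕ) : R) ^ (n - j)) =
      (of fun i j : Fin n => ((i : R) + 1) ^ ((j : ℕ) + 1)).submatrix
        Fin.revPerm Fin.revPerm := by
    ext i j
    simp only [submatrix_apply, of_apply, Fin.revPerm_apply, Fin.val_rev]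
    rw [show n - (j : ℕ) = n - (j + 1) + 1 by omega,
      show n - (i : ℕ) = n - (i + 1) + 1 by omega, Nat.cast_succ]
  rw [hrev, det_submatrix_equiv_self, det_of_succ_pow_succ]

/-- For an odd prime `p`, the `(p-1)×(p-1)` matrix `A` over `F_p` with entries
`A_{ij} = (p-i)^{p-j}` satisfies `det A ≡ (-1)^{(p²-1)/8}·((p-1)/2)! (mod p)`. -/
theorem det_vandermonde_type (p : ℕ) (hp : p.Prime) (hodd : Odd p) :
    Matrix.det (Matrix.of fun i j : Fin (p - 1) =>
        ((p - (i.val + 1) : ℕ) : ZMod p) ^ (p - (j.val + 1))) =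
      (-1 : ZMod p) ^ ((p ^ 2 - 1) / 8) * (((p - 1) / 2).factorial : ZMod p) := by
  have := Fact.mk hp
  obtain ⟨h, hph⟩ := hodd
  have hA : (of fun i j : Fin (p - 1) => ((p - (i.val + 1) : ℕ) : ZMod p) ^ (p - (j.val + 1))) =
      of fun i j : Fin (p - 1) => ((p - 1 - i : ℕ) : ZMod p) ^ (p - 1 - j) := by
    simp only [Nat.sub_sub, add_comm]
  have hexp : (p ^ 2 - 1) / 8 = (h + 1) * h / 2 := by
    subst hph
    rw [show (2 * h + 1) ^ 2 - 1 = 4 * ((h + 1) * h) by ring_nf; omega]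
    omega
  rw [hA, det_of_sub_pow_sub, show p - 1 = 2 * h by omega, ZMod.superFactorial_two_mul p h hph,
    hexp, show 2 * h / 2 = h by omega]
end

section
/- Let p be a prime with p \equiv 1 \pmod{4} and let A be the (p-1) x (p-1) matrix over F_p with entries A_{ij} = (p-i)^{p-j}. Then (det A)^2 \equiv -1 \pmod{p}. -/
/-!
The matrix is `diag(a) · V`, where `V` is the Vandermonde matrix of `a_i = p - i` with its columns
reversed, and the `a_i` run over all of `𝔽_p^×`. Squaring the Vandermonde determinant gives
`(-1)^C(p-1,2) ∏_{i ≠ j} (a_j - a_i)`. For fixed `x ≠ 0`, the product of `y - x` over all `y ≠ x`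
is the product of all nonzero elements, i.e. `-1` (Wilson); dropping the factor `y = 0`, which is
`-x`, leaves `x⁻¹`. Hence `∏_{i ≠ j} (a_j - a_i) = (∏ a_i)⁻¹ = -1`, while `(∏ a_i)² = 1`, the
permutation sign squares to `1`, and `C(p-1,2)` is even when `4 ∣ p - 1`.
-/

open Finset Matrix

theorem Nat.even_choose_two_of_four_dvd {n : ℕ} (h : 4 ∣ n) : Even (n.choose 2) := by
  obtain ⟨k, rfl⟩ := h
  refine ⟨k * (4 * k - 1), ?_⟩
  rw [Nat.choose_two_right, show 4 * k * (4 * k - 1) = 2 * (2 * (k * (4 * k - 1))) by ring,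
    Nat.mul_div_cancel_left _ two_pos, two_mul]

theorem Fin.sum_card_Ioi (n : ℕ) : ∑ i : Fin n, #(Ioi i) = n.choose 2 := by
  simp_rw [Fin.card_Ioi]
  rw [Fin.sum_univ_eq_sum_range (fun i => n - 1 - i), sum_range_reflect (fun i => i) n,
    sum_range_id, Nat.choose_two_right]

section Vandermonde

variable {R : Type*} [CommRing R] {n : ℕ}

theorem Matrix.det_vandermonde_sq (v : Fin n → R) :
    det (vandermonde v) ^ 2 = (-1) ^ n.choose 2 * ∏ i, ∏ j ∈ {i}ᶜ, (v j - v i) := by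
  have hsq : ∀ i j : Fin n, (v j - v i) ^ 2 = -1 * ((v j - v i) * (v i - v j)) :=
    fun _ _ => by ring
  rw [det_vandermonde, ← prod_pow, ← Fin.sum_card_Ioi, ← prod_prod_Ioi_mul_eq_prod_prod_off_diag,
    ← prod_pow_eq_pow_sum, ← prod_mul_distrib]
  refine prod_congr rfl fun i _ => ?_
  rw [← prod_const, ← prod_mul_distrib, ← prod_pow]
  exact prod_congr rfl fun j _ => hsq i j

theorem Matrix.det_of_pow_rev_succ (v : Fin n → R) :
    det (of fun i j : Fin n => v i ^ ((Fin.rev j : ℕ) + 1)) =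
      Equiv.Perm.sign (Fin.revPerm (n := n)) * (∏ i, v i) * det (vandermonde v) := by
  have : (of fun i j : Fin n => v i ^ ((Fin.rev j : ℕ) + 1)) =
      of fun i j => v i * (vandermonde v).submatrix id Fin.revPerm i j := by
    ext i j
    simp [pow_succ, mul_comm]
  rw [this, det_mul_column, det_permute']
  ring

end Vandermonde

namespace FiniteField

variable {F : Type*} [Field F] [Fintype F] [DecidableEq F]

theorem prod_compl_zero_eq_neg_one : ∏ x ∈ ({0}ᶜ : Finset F), x = -1 := by
  rw [← Units.val_one, ← Units.val_neg, ← prod_univ_units_id_eq_neg_one, Units.coe_prod]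
  symm
  refine prod_bij (fun u _ => (u : F)) (fun u _ => by simp [u.ne_zero])
    (fun _ _ _ _ h => Units.val_injective h) ?_ (fun _ _ => rfl)
  intro x hx
  exact ⟨(isUnit_iff_ne_zero.mpr (by simpa using hx)).unit, mem_univ _, rfl⟩

theorem prod_compl_singleton_sub_eq_neg_one (x : F) :
    ∏ y ∈ ({x}ᶜ : Finset F), (y - x) = -1 := by
  rw [← prod_compl_zero_eq_neg_one]
  exact prod_equiv (Equiv.subRight x) (by simp [sub_eq_zero]) (fun _ _ => rfl)

theorem prod_erase_compl_zero_sub_eq_inv {x : F} (hx : x ≠ 0) :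
    ∏ y ∈ ({0}ᶜ : Finset F).erase x, (y - x) = x⁻¹ := by
  have h := prod_compl_singleton_sub_eq_neg_one x
  rw [← mul_prod_erase _ _ (show 0 ∈ ({x}ᶜ : Finset F) by simpa using hx.symm), ← compl_insert,
    pair_comm, compl_insert] at h
  exact eq_inv_of_mul_eq_one_right (by linear_combination -h)

variable {ι : Type*} [Fintype ι] {v : ι ↪ F}

theorem prod_eq_neg_one_of_map_univ_eq (hv : univ.map v = {0}ᶜ) : ∏ i, v i = -1 := by
  rw [← prod_compl_zero_eq_neg_one, ← hv, prod_map]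

theorem prod_prod_compl_sub_eq_neg_one_of_map_univ_eq [DecidableEq ι] (hv : univ.map v = {0}ᶜ) :
    ∏ i, ∏ j ∈ {i}ᶜ, (v j - v i) = -1 := by
  have hinner : ∀ i, ∏ j ∈ {i}ᶜ, (v j - v i) = (v i)⁻¹ := fun i => by
    have hvi : v i ∈ ({0}ᶜ : Finset F) := hv ▸ mem_map_of_mem v (mem_univ i)
    rw [← prod_erase_compl_zero_sub_eq_inv (by simpa using hvi), ← hv, ← map_erase, prod_map,
      compl_singleton]
  rw [prod_congr rfl fun i _ => hinner i, prod_inv_distrib, prod_eq_neg_one_of_map_univ_eq hv,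
    inv_neg, inv_one]

end FiniteField

namespace ZMod

def subSuccEmbedding (p : ℕ) : Fin (p - 1) ↪ ZMod p :=
  ⟨fun i => ((p - (i + 1) : ℕ) : ZMod p), fun i j h => by
    have hi := i.isLt
    have hj := j.isLt
    rw [natCast_eq_natCast_iff', Nat.mod_eq_of_lt (by omega), Nat.mod_eq_of_lt (by omega)] at h
    exact Fin.ext (by omega)⟩

theorem subSuccEmbedding_apply (p : ℕ) (i : Fin (p - 1)) :
    subSuccEmbedding p i = ((p - (i + 1) : ℕ) : ZMod p) :=
  rfl

theorem map_univ_subSuccEmbedding (p : ℕ) [NeZero p] :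
    univ.map (subSuccEmbedding p) = {0}ᶜ := by
  refine eq_of_subset_of_card_le (fun x hx => ?_) ?_
  · obtain ⟨i, -, rfl⟩ := mem_map.mp hx
    have hi := i.isLt
    rw [mem_compl, mem_singleton, subSuccEmbedding_apply, natCast_eq_zero_iff]
    exact fun h => absurd (Nat.le_of_dvd (by omega) h) (by omega)
  · simp [card_compl, ZMod.card]

end ZMod

/-- For a prime `p ≡ 1 (mod 4)`, the `(p-1)×(p-1)` matrix `A` over `F_p` with entries
`A_{ij} = (p-i)^{p-j}` satisfies `(det A)² ≡ -1 (mod p)`. -/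
theorem det_sq_eq_neg_one (p : ℕ) (hp : p.Prime) (h4 : p % 4 = 1) :
    (Matrix.det (Matrix.of fun i j : Fin (p - 1) =>
        ((p - (i.val + 1) : ℕ) : ZMod p) ^ (p - (j.val + 1)))) ^ 2 = -1 := by
  have := Fact.mk hp
  have hA : (of fun i j : Fin (p - 1) => ((p - (i.val + 1) : ℕ) : ZMod p) ^ (p - (j.val + 1))) =
      of fun i j => ZMod.subSuccEmbedding p i ^ ((Fin.rev j : ℕ) + 1) := by
    ext i j
    rw [of_apply, of_apply, ZMod.subSuccEmbedding_apply, Fin.val_rev]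
    congr 1
    omega
  have hv := ZMod.map_univ_subSuccEmbedding p
  rw [hA, det_of_pow_rev_succ, mul_pow, mul_pow, det_vandermonde_sq,
    FiniteField.prod_eq_neg_one_of_map_univ_eq hv,
    FiniteField.prod_prod_compl_sub_eq_neg_one_of_map_univ_eq hv,
    (Nat.even_choose_two_of_four_dvd (by omega)).neg_one_pow]
  simp [← Int.cast_pow, ← Units.val_pow_eq_pow_val, Int.units_sq]
end

section
/- For every integer n \ge 2, D_{2n} = D_{2n+1} = (-1)^n, where D_m is the m x m determinant with entries d_{ij} defined by: d_{1j} = 1 for all j; for i \ge 2, d_{ij} = 0 for j < i-1, d_{i,i-1} = 1, d_{ii} = (1 - (-1)^i)/2, and d_{ij} = 1 for j > i. -/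
/-- The `m × m` integer matrix (rows/columns indexed `1, …, m`) whose first row is
all `1`s, and whose row `i ≥ 2` has entry `1` in column `i-1`, entry `(1-(-1)^i)/2`
in column `i`, entry `1` in every column `j > i`, and `0` elsewhere. -/
def Dmatrix (m : ℕ) : Matrix (Fin m) (Fin m) ℤ :=
  Matrix.of fun i j =>
    if i.val + 1 = 1 then 1
    else if j.val + 1 < i.val then 0
    else if j.val + 1 = i.val then 1
    else if j.val = i.val then (1 - (-1 : ℤ) ^ (i.val + 1)) / 2
    else 1

/-- The determinant `D_m` of the matrix above. -/
def D (m : ℕ) : ℤ := Matrix.det (Dmatrix m)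

lemma Dmatrix_eq_of_val {m m' : ℕ} {i j : Fin m} {i' j' : Fin m'}
    (hi : i.val = i'.val) (hj : j.val = j'.val) :
    Dmatrix m i j = Dmatrix m' i' j' := by
  simp only [Dmatrix, Matrix.of_apply, hi, hj]

lemma submatrix_last (n : ℕ) :
    (Dmatrix (n + 1)).submatrix (Fin.last n).succAbove (Fin.last n).succAbove = Dmatrix n := by
  ext i j
  simp only [Matrix.submatrix_apply, Fin.succAbove_last]
  exact Dmatrix_eq_of_val (by simp) (by simp)


lemma det_single (n : ℕ) :
    (Matrix.updateRow (Dmatrix (n + 1)) (Fin.last n)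
      (Pi.single (Fin.last n) 1)).det = D n := by
  rw [Matrix.det_succ_row _ (Fin.last n),
    Finset.sum_eq_single_of_mem (Fin.last n) (Finset.mem_univ _)]
  · have hsub : (Matrix.updateRow (Dmatrix (n + 1)) (Fin.last n)
        (Pi.single (Fin.last n) 1)).submatrix
        (Fin.last n).succAbove (Fin.last n).succAbove = Dmatrix n := by
      ext i j
      simp only [Matrix.submatrix_apply, Fin.succAbove_last,
        Matrix.updateRow_ne (Fin.castSucc_lt_last i).ne]
      exact Dmatrix_eq_of_val (by simp) (by simp)
    rw [hsub]
    simp [D, pow_add, ← mul_pow]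
  · intro j _ hj
    simp [Matrix.updateRow_self, Pi.single_eq_of_ne hj]

lemma D_succ_of_odd (n : ℕ) (hn : n % 2 = 1) : D (n + 1) = - D n := by
  have h1 : 1 ≤ n := by omega
  have hpow : (-1 : ℤ) ^ (n + 1) = 1 := Even.neg_one_pow ⟨(n+1)/2, by omega⟩
  have hj₀ : n - 1 < n + 1 := by omega
  rw [D, Matrix.det_succ_row _ (Fin.last n),
    Finset.sum_eq_single_of_mem (⟨n - 1, hj₀⟩ : Fin (n + 1)) (Finset.mem_univ _)]
  · have hentry : Dmatrix (n + 1) (Fin.last n) ⟨n - 1, hj₀⟩ = 1 := by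
      simp only [Dmatrix, Matrix.of_apply, Fin.val_last, Fin.val_mk]
      split_ifs <;> first | rfl | omega | (exfalso; omega)
    have hsub : (Dmatrix (n + 1)).submatrix (Fin.last n).succAbove
        (⟨n - 1, hj₀⟩ : Fin (n + 1)).succAbove = Dmatrix n := by
      ext i j
      simp only [Matrix.submatrix_apply, Fin.succAbove_last]
      rcases lt_or_ge j.val (n - 1) with h | h
      · rw [Fin.succAbove_of_castSucc_lt _ _ (by simp [Fin.lt_def]; omega)]
        exact Dmatrix_eq_of_val (by simp) (by simp)
      · have hjv : j.val = n - 1 := by omega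
        rw [Fin.succAbove_of_le_castSucc _ _ (by simp [Fin.le_def]; omega)]
        have hsv : (j.succ : Fin (n + 1)).val = n := by simp [hjv]; omega
        have hiv : i.val ≤ n - 1 := by have := i.isLt; omega
        simp only [Dmatrix, Matrix.of_apply, Fin.coe_castSucc, hsv, hjv]
        have hd : ∀ k : ℕ, k % 2 = 0 → (1 - (-1 : ℤ) ^ (k + 1)) / 2 = 1 := by
          intro k hk
          rw [Odd.neg_one_pow ⟨k/2, by omega⟩]; norm_num
        split_ifs with a b c d e f g <;>
          first | rfl | omega | (exfalso; omega) | (rw [hd _ (by omega)])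
    rw [hentry, hsub]
    have hsign : (-1 : ℤ) ^ ((Fin.last n).val + ((⟨n - 1, hj₀⟩ : Fin (n + 1)) : ℕ)) = -1 :=
      Odd.neg_one_pow (by simp only [Fin.val_last, Fin.val_mk]; exact ⟨n-1, by omega⟩)
    rw [hsign, D]; ring
  · intro j _ hj
    have hjv : j.val ≠ n - 1 := fun h => hj (Fin.ext (by simpa using h))
    have hle : j.val ≤ n := by omega
    have hentry : Dmatrix (n + 1) (Fin.last n) j = 0 := by
      simp only [Dmatrix, Matrix.of_apply, Fin.val_last]
      split_ifs <;> first | rfl | omega | (exfalso; omega) | (rw [hpow]; norm_num)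
    rw [hentry]; ring

lemma D_odd_rec (m : ℕ) (hm : m % 2 = 0) : D (m + 3) = - D (m + 1) := by
  have hj₀ : m + 1 < m + 3 := by omega
  have key : D (m + 3) = Matrix.det (Dmatrix (m + 2 + 1)) := rfl
  rw [key, Matrix.det_succ_row _ (Fin.last (m + 2)),
    Finset.sum_eq_add_of_mem (⟨m + 1, hj₀⟩ : Fin (m + 3)) (Fin.last (m + 2))
      (Finset.mem_univ _) (Finset.mem_univ _)
      (by intro h; have := congrArg Fin.val h; simp at this)
      ?_]
  · -- evaluate the two terms
    have hentry₀ : Dmatrix (m + 3) (Fin.last (m + 2)) ⟨m + 1, hj₀⟩ = 1 := by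
      simp only [Dmatrix, Matrix.of_apply, Fin.val_last, Fin.val_mk]
      split_ifs <;> first | rfl | omega | (exfalso; omega)
    have hentry₁ : Dmatrix (m + 3) (Fin.last (m + 2)) (Fin.last (m + 2)) = 1 := by
      simp only [Dmatrix, Matrix.of_apply, Fin.val_last]
      have hd : (1 - (-1 : ℤ) ^ (m + 2 + 1)) / 2 = 1 := by
        rw [Odd.neg_one_pow ⟨(m+2)/2, by omega⟩]; norm_num
      split_ifs <;> first | rfl | omega | (exfalso; omega) | (rw [hd])
    have hsub₁ : (Dmatrix (m + 3)).submatrix (Fin.last (m + 2)).succAbove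
        (Fin.last (m + 2)).succAbove = Dmatrix (m + 2) := submatrix_last (m + 2)
    have hsubA : (Dmatrix (m + 3)).submatrix (Fin.last (m + 2)).succAbove
        (⟨m + 1, hj₀⟩ : Fin (m + 3)).succAbove =
        Matrix.updateRow (Dmatrix (m + 2)) (Fin.last (m + 1))
          (Dmatrix (m + 2) (Fin.last (m + 1)) + Pi.single (Fin.last (m + 1)) 1) := by
      ext i j
      simp only [Matrix.submatrix_apply, Fin.succAbove_last]
      rcases eq_or_ne i (Fin.last (m + 1)) with hi | hi
      · subst hi
        rw [Matrix.updateRow_self]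
        have hd0 : (1 - (-1 : ℤ) ^ (m + 1 + 1)) / 2 = 0 := by
          rw [Even.neg_one_pow ⟨(m+2)/2, by omega⟩]; norm_num
        rcases lt_or_ge j.val (m + 1) with h | h
        · rw [Fin.succAbove_of_castSucc_lt _ _ (by simp [Fin.lt_def]; omega)]
          have hjne : j ≠ Fin.last (m + 1) := by
            intro hh; rw [hh] at h; simp at h
          rw [Pi.add_apply, Pi.single_eq_of_ne hjne, add_zero]
          exact Dmatrix_eq_of_val (by simp) (by simp)
        · have hjv : j.val = m + 1 := by have := j.isLt; omega
          have hj' : j = Fin.last (m + 1) := Fin.ext (by simpa using hjv)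
          subst hj'
          rw [Fin.succAbove_of_le_castSucc _ _ (by simp [Fin.le_def])]
          rw [Pi.add_apply, Pi.single_eq_same]
          have hL : Dmatrix (m + 3) (Fin.castSucc (Fin.last (m + 1)))
              (Fin.succ (Fin.last (m + 1))) = 1 := by
            simp only [Dmatrix, Matrix.of_apply, Fin.coe_castSucc, Fin.val_last, Fin.val_succ]
            split_ifs <;> first | rfl | omega | (exfalso; omega)
          have hR : Dmatrix (m + 2) (Fin.last (m + 1)) (Fin.last (m + 1)) = 0 := by
            simp only [Dmatrix, Matrix.of_apply, Fin.val_last]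
            split_ifs <;> first | rfl | omega | (exfalso; omega) | (rw [hd0])
          rw [hL, hR]; norm_num
      · rw [Matrix.updateRow_ne hi]
        have hiv : i.val < m + 1 := by
          have := i.isLt
          rcases lt_or_ge i.val (m + 1) with h | h
          · exact h
          · exact absurd (Fin.ext (by simp; omega) : i = Fin.last (m + 1)) hi
        rcases lt_or_ge j.val (m + 1) with h | h
        · rw [Fin.succAbove_of_castSucc_lt _ _ (by simp [Fin.lt_def]; omega)]
          exact Dmatrix_eq_of_val (by simp) (by simp)
        · have hjv : j.val = m + 1 := by have := j.isLt; omega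
          rw [Fin.succAbove_of_le_castSucc _ _ (by simp [Fin.le_def]; omega)]
          have hsv : (j.succ : Fin (m + 3)).val = m + 2 := by simp [hjv]
          simp only [Dmatrix, Matrix.of_apply, Fin.coe_castSucc, hsv, hjv]
          split_ifs <;> first | rfl | omega | (exfalso; omega)
    rw [hentry₀, hentry₁, hsub₁, hsubA, Matrix.det_updateRow_add,
      Matrix.updateRow_eq_self, det_single]
    have hs₀ : (-1 : ℤ) ^ ((Fin.last (m+2)).val + ((⟨m + 1, hj₀⟩ : Fin (m + 3)) : ℕ)) = -1 :=
      Odd.neg_one_pow (by simp only [Fin.val_last, Fin.val_mk]; exact ⟨m + 1, by omega⟩)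
    have hs₁ : (-1 : ℤ) ^ ((Fin.last (m+2)).val + ((Fin.last (m+2)) : ℕ)) = 1 :=
      Even.neg_one_pow (by simp only [Fin.val_last]; exact ⟨m + 2, by omega⟩)
    rw [hs₀, hs₁]
    show -1 * 1 * (D (m + 2) + D (m + 1)) + 1 * 1 * D (m + 2) = - D (m + 1)
    ring
  · intro j _ hj
    obtain ⟨hj₀', hj₁'⟩ := hj
    have hjv : j.val ≠ m + 1 := fun h => hj₀' (Fin.ext (by simpa using h))
    have hjv' : j.val ≠ m + 2 := fun h => hj₁' (Fin.ext (by simpa using h))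
    have hle : j.val < m + 3 := j.isLt
    have hentry : Dmatrix (m + 3) (Fin.last (m + 2)) j = 0 := by
      simp only [Dmatrix, Matrix.of_apply, Fin.val_last]
      split_ifs <;> first | rfl | omega | (exfalso; omega)
    rw [hentry]; ring

lemma D_key : ∀ m : ℕ, D (2 * (m + 1)) = (-1) ^ (m + 1) ∧ D (2 * (m + 1) + 1) = (-1) ^ (m + 1) := by
  intro m
  induction m with
  | zero =>
    constructor
    · show D 2 = (-1) ^ 1; decide
    · show D 3 = (-1) ^ 1; decide
  | succ k ih =>
    obtain ⟨h1, h2⟩ := ih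
    have he : D (2 * (k + 1) + 1 + 1) = - D (2 * (k + 1) + 1) :=
      D_succ_of_odd (2 * (k + 1) + 1) (by omega)
    have ho : D (2 * (k + 1) + 3) = - D (2 * (k + 1) + 1) :=
      D_odd_rec (2 * (k + 1)) (by omega)
    constructor
    · rw [show 2 * (k + 1 + 1) = 2 * (k + 1) + 1 + 1 by ring, he, h2,
        pow_succ]
      ring
    · rw [show 2 * (k + 1 + 1) + 1 = 2 * (k + 1) + 3 by ring, ho, h2,
        pow_succ]
      ring

/-- For every integer `n ≥ 2`, `D_{2n} = D_{2n+1} = (-1)^n`. -/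
theorem D_even_odd (n : ℕ) (hn : 2 ≤ n) :
    D (2 * n) = (-1) ^ n ∧ D (2 * n + 1) = (-1) ^ n := by
  obtain ⟨h1, h2⟩ := D_key (n - 1)
  rw [show n - 1 + 1 = n by omega] at h1 h2
  exact ⟨h1, h2⟩
end

section
/- Let p \ge 3 be a prime. Then p divides !p (where !p = \sum_{k=0}^{p-1} k!) if and only if p divides the derangement number S_{p-1}. -/
/-!
Modulo `n + 1` the product `(k + 1)(k + 2)⋯n` is `(-1)^(n-k) (n - k)!`, so the alternating formula
`D n = ∑ₖ (-1)^k (k + 1)⋯n` for derangements collapses to `(-1)^n ∑ₖ (n - k)!`, which is `±` the left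
factorial of `n + 1`; divisibility by `n + 1` does not see the sign.
-/

open Finset Nat

theorem ZMod.cast_succ_ascFactorial_sub {n k : ℕ} (hkn : k ≤ n) :
    ((k + 1).ascFactorial (n - k) : ZMod (n + 1)) = (-1) ^ (n - k) * (n - k)! := by
  have hdesc := ZMod.cast_descFactorial (p := n + 1) (n := n - k) (by omega)
  rw [Nat.add_sub_cancel] at hdesc
  rw [← add_descFactorial_eq_ascFactorial, Nat.add_sub_cancel' hkn, hdesc]

theorem ZMod.numDerangements_eq_neg_one_pow_mul_sum_factorial (n : ℕ) :
    (numDerangements n : ZMod (n + 1)) = (-1) ^ n * ∑ k ∈ range (n + 1), (k ! : ZMod (n + 1)) := by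
  have hterm : ∀ k ∈ range (n + 1),
      (((-1) ^ k * (k + 1).ascFactorial (n - k) : ℤ) : ZMod (n + 1)) = (-1) ^ n * (n - k)! := by
    intro k hk
    have hkn : k ≤ n := Nat.lt_succ_iff.mp (mem_range.mp hk)
    push_cast
    rw [ZMod.cast_succ_ascFactorial_sub hkn, ← mul_assoc, ← pow_add, Nat.add_sub_cancel' hkn]
  rw [← sum_range_reflect, mul_sum, ← Int.cast_natCast, numDerangements_sum, Int.cast_sum]
  exact sum_congr rfl fun k hk => by rw [hterm k hk, Nat.add_sub_cancel]

theorem prime_dvd_leftFactorial_iff_dvd_derangement_general (p : ℕ) (hp : p.Prime) :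
    p ∣ (∑ k ∈ Finset.range p, k.factorial) ↔ p ∣ numDerangements (p - 1) := by
  obtain ⟨n, rfl⟩ := Nat.exists_eq_add_one_of_ne_zero hp.ne_zero
  rw [← ZMod.natCast_eq_zero_iff, ← ZMod.natCast_eq_zero_iff, Nat.add_sub_cancel,
    ZMod.numDerangements_eq_neg_one_pow_mul_sum_factorial, (isUnit_neg_one.pow n).mul_right_eq_zero,
    Nat.cast_sum]

/-- For a prime `p ≥ 3`, `p` divides the left factorial `!p = ∑_{k=0}^{p-1} k!`
if and only if `p` divides the derangement number `S_{p-1}`. -/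
theorem prime_dvd_leftFactorial_iff_dvd_derangement (p : ℕ) (hp : p.Prime) (hp3 : 3 ≤ p) :
    p ∣ (∑ k ∈ Finset.range p, k.factorial) ↔ p ∣ numDerangements (p - 1) :=
  prime_dvd_leftFactorial_iff_dvd_derangement_general p hp
end
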